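/- Let n be a network of nodes with private inputs s_i ∈ ZMod p, and let each node i send a value r_i^j ∈ ZMod p to each neighbor j and keep r_i^i = s_i - ∑_{j ∈ N_i} r_i^j. Define s'_i = r_i^i + ∑_{j ∈ N_i} r_j^i. Then ∑_{i} s'_i = ∑_i s_i in ZMod p. -/
import Mathlib

/-- Symmetric exchange of additive shares over the edges of a graph does not
change the total sum of the inputs. -/
theorem share_exchange_preserves_sum (p : ℕ) (hp : 0 < p)
    {V : Type*} [Fintype V] (G : SimpleGraph V) [DecidableRel G.Adj]
    (s : V → ZMod p) (r : V → V → ZMod p)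
    (s' : V → ZMod p)
    (hs' : ∀ i, s' i =
      (s i - ∑ j ∈ G.neighborFinset i, r i j) + ∑ j ∈ G.neighborFinset i, r j i) :
    ∑ i, s' i = ∑ i, s i := by
  simp only [hs', sub_add, Finset.sum_sub_distrib]
  have : ∑ i, ∑ j ∈ G.neighborFinset i, r i j = ∑ i, ∑ j ∈ G.neighborFinset i, r j i := by
    rw [Finset.sum_comm' (t' := Finset.univ) (s' := fun j => G.neighborFinset j)]
    intro i j
    simp [SimpleGraph.adj_comm, and_comm]
  rw [this]
  ring
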